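/- Let P be a polytope in ℝⁿ that is a zero-summand, and let d ∈ ℝⁿ be a non-zero vector such that the face S_{−d}(P) has affine span of dimension at most n − 2. Then the face S_d(P) is a zero-summand relative to the hyperplane direction d: there exist finitely many polytopes R_1, …, R_r and T_1, …, T_s in ℝⁿ, each contained in a translate of the orthogonal complement of d and each having affine span of dimension at most n − 2, such that S_d(P) + R_1 + ⋯ + R_r = T_1 + ⋯ + T_s (Minkowski sums). -/

import Mathlib

/-!
Taking the face in direction `d` commutes with Minkowski sums of compact sets, so
`P + ∑ Pᵢ = ∑ Qⱼ` yields one face equation for `d` and one for `-d`. A zero volume summand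
lying in a hyperplane orthogonal to `d` is equal to both of its faces; any other zero volume
summand has faces of dimension at most `n - 2`, because a face of dimension `n - 1` would
span the same hyperplane direction as the summand itself. Adding the two face equations
crosswise, the summands lying in such hyperplanes occur on both sides and cancel (Minkowski
sums of polytopes cancel, by Hahn–Banach separation), which leaves an equation expressing
`S_d(P)` through `S_{-d}(P)` and faces of dimension at most `n - 2`.
-/

open RealInnerProductSpace Pointwise

/-- A polytope in `ℝⁿ`: the convex hull of a non-empty finite set of points. -/
def IsPolytope {n : ℕ} (P : Set (EuclideanSpace ℝ (Fin n))) : Prop :=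
  ∃ s : Finset (EuclideanSpace ℝ (Fin n)),
    s.Nonempty ∧ P = convexHull ℝ (s : Set (EuclideanSpace ℝ (Fin n)))

/-- A zero volume polytope: a polytope with empty interior. -/
def IsZeroVolPolytope {n : ℕ} (P : Set (EuclideanSpace ℝ (Fin n))) : Prop :=
  IsPolytope P ∧ interior P = ∅

/-- A zero-summand: a polytope `P` such that `P + P₁ + ⋯ + P_r = Q₁ + ⋯ + Q_s`
for some zero volume polytopes `Pᵢ`, `Qⱼ` (Minkowski sums). -/
def IsZeroSummand {n : ℕ} (P : Set (EuclideanSpace ℝ (Fin n))) : Prop :=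
  ∃ (r s : ℕ) (Ps : Fin r → Set (EuclideanSpace ℝ (Fin n)))
    (Qs : Fin s → Set (EuclideanSpace ℝ (Fin n))),
    (∀ i, IsZeroVolPolytope (Ps i)) ∧ (∀ j, IsZeroVolPolytope (Qs j)) ∧
    P + ∑ i, Ps i = ∑ j, Qs j

/-- The face of `P` in direction `d`:
`S_d(P) = {x ∈ P | ⟪x, d⟫ = max_{y ∈ P} ⟪y, d⟫}`. -/
def faceIn {n : ℕ} (d : EuclideanSpace ℝ (Fin n))
    (P : Set (EuclideanSpace ℝ (Fin n))) : Set (EuclideanSpace ℝ (Fin n)) :=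
  {x ∈ P | ⟪x, d⟫ = sSup ((fun y => ⟪y, d⟫) '' P)}

/-- The dimension of the affine span of a set in `ℝⁿ`. -/
noncomputable def affDim {n : ℕ} (S : Set (EuclideanSpace ℝ (Fin n))) : ℕ :=
  Module.finrank ℝ (affineSpan ℝ S).direction

section ExposedFaces

variable {E : Type*} [AddCommGroup E] [Module ℝ E] [TopologicalSpace E]

namespace ContinuousLinearMap

variable (l : StrongDual ℝ E)

theorem toExposed_add (A B : Set E) :
    l.toExposed (A + B) = l.toExposed A + l.toExposed B := by
  ext x
  constructor
  · rintro ⟨⟨a, ha, b, hb, rfl⟩, hmax⟩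
    refine ⟨a, ⟨ha, fun a' ha' => ?_⟩, b, ⟨hb, fun b' hb' => ?_⟩, rfl⟩
    · have := hmax (a' + b) (Set.add_mem_add ha' hb)
      simp only [map_add] at this
      linarith
    · have := hmax (a + b') (Set.add_mem_add ha hb')
      simp only [map_add] at this
      linarith
  · rintro ⟨a, ⟨ha, hmaxa⟩, b, ⟨hb, hmaxb⟩, rfl⟩
    refine ⟨Set.add_mem_add ha hb, ?_⟩
    rintro _ ⟨a', ha', b', hb', rfl⟩
    simpa only [map_add] using add_le_add (hmaxa a' ha') (hmaxb b' hb')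

theorem toExposed_zero : l.toExposed 0 = 0 := by
  ext x
  simp +contextual [toExposed]

theorem toExposed_sum {ι : Type*} (s : Finset ι) (A : ι → Set E) :
    l.toExposed (∑ i ∈ s, A i) = ∑ i ∈ s, l.toExposed (A i) := by
  classical
  induction s using Finset.induction_on with
  | empty => simpa using l.toExposed_zero
  | insert i s hi ih => rw [Finset.sum_insert hi, Finset.sum_insert hi, toExposed_add, ih]

theorem toExposed_nonempty {A : Set E} (hA : IsCompact A) (hne : A.Nonempty) :
    (l.toExposed A).Nonempty := by
  obtain ⟨x, hx, hmax⟩ := hA.exists_isMaxOn hne l.continuous.continuousOn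
  exact ⟨x, hx, fun y hy => hmax hy⟩

end ContinuousLinearMap

theorem Convex.subset_of_add_subset_add_right [IsTopologicalAddGroup E] [ContinuousSMul ℝ E]
    [LocallyConvexSpace ℝ E] {A B C : Set E} (hB : Convex ℝ B) (hBc : IsClosed B)
    (hC : IsCompact C) (hCne : C.Nonempty) (h : A + C ⊆ B + C) : A ⊆ B := by
  intro x hx
  by_contra hxB
  obtain ⟨f, u, hfB, hfx⟩ := geometric_hahn_banach_closed_point hB hBc hxB
  obtain ⟨c, hc, hmax⟩ := hC.exists_isMaxOn hCne f.continuous.continuousOn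
  obtain ⟨b, hb, c', hc', hbc⟩ := h (Set.add_mem_add hx hc)
  have hsum : f b + f c' = f x + f c := by rw [← map_add, ← map_add]; exact congrArg f hbc
  linarith [hfB b hb, show f c' ≤ f c from hmax hc']

end ExposedFaces

section AffineDimension

theorem exists_subset_vadd_of_vectorSpan_le {V : Type*} [AddCommGroup V] [Module ℝ V]
    {A : Set V} {K : Submodule ℝ V} (h : vectorSpan ℝ A ≤ K) : ∃ v : V, A ⊆ v +ᵥ (K : Set V) := by
  rcases A.eq_empty_or_nonempty with rfl | ⟨x₀, hx₀⟩
  · exact ⟨0, Set.empty_subset _⟩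
  · exact ⟨x₀, fun x hx => ⟨x - x₀, h (vsub_mem_vectorSpan ℝ hx hx₀), by simp⟩⟩

theorem finrank_vectorSpan_lt_of_interior_eq_empty {V : Type*} [NormedAddCommGroup V]
    [NormedSpace ℝ V] [FiniteDimensional ℝ V] {A : Set V} (hA : Convex ℝ A) (hne : A.Nonempty)
    (hint : interior A = ∅) : Module.finrank ℝ (vectorSpan ℝ A) < Module.finrank ℝ V := by
  refine Submodule.finrank_lt fun htop => ?_
  have hspan :=
    (AffineSubspace.affineSpan_eq_top_iff_vectorSpan_eq_top_of_nonempty ℝ V V hne).2 htop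
  simpa [hint] using hA.interior_nonempty_iff_affineSpan_eq_top.2 hspan

variable {F : Type*} [NormedAddCommGroup F] [InnerProductSpace ℝ F]

theorem vectorSpan_le_orthogonal_singleton_iff {d : F} {A : Set F} :
    vectorSpan ℝ A ≤ (ℝ ∙ d)ᗮ ↔ ∀ x ∈ A, ∀ y ∈ A, ⟪x, d⟫ = ⟪y, d⟫ := by
  simp only [vectorSpan_def, Submodule.span_le, Set.vsub_subset_iff, SetLike.mem_coe,
    Submodule.mem_orthogonal_singleton_iff_inner_left, vsub_eq_sub, inner_sub_left, sub_eq_zero]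

theorem orthogonal_span_singleton_neg (d : F) : (ℝ ∙ -d)ᗮ = (ℝ ∙ d)ᗮ := by
  rw [← Set.neg_singleton, Submodule.span_neg]

end AffineDimension

section Faces

variable {n : ℕ}

local notation "E" => EuclideanSpace ℝ (Fin n)

theorem mem_faceIn_of_forall_le {d x : E} {A : Set E} (hx : x ∈ A)
    (hmax : ∀ y ∈ A, ⟪y, d⟫ ≤ ⟪x, d⟫) : x ∈ faceIn d A := by
  have hgreatest : IsGreatest ((fun y => ⟪y, d⟫) '' A) ⟪x, d⟫ :=
    ⟨⟨x, hx, rfl⟩, by rintro _ ⟨y, hy, rfl⟩; exact hmax y hy⟩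
  exact ⟨hx, hgreatest.csSup_eq.symm⟩

theorem faceIn_eq_toExposed {d : E} {A : Set E} (hA : IsCompact A) :
    faceIn d A = (innerSL ℝ d).toExposed A := by
  ext x
  simp only [ContinuousLinearMap.toExposed, innerSL_apply_apply, ← real_inner_comm d]
  refine ⟨fun hx => ⟨hx.1, fun y hy => ?_⟩, fun hx => mem_faceIn_of_forall_le hx.1 hx.2⟩
  rw [hx.2]
  exact le_csSup (hA.bddAbove_image (continuous_id.inner continuous_const).continuousOn)
    ⟨y, hy, rfl⟩

theorem faceIn_of_vectorSpan_le {d : E} {A : Set E} (h : vectorSpan ℝ A ≤ (ℝ ∙ d)ᗮ) :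
    faceIn d A = A :=
  Set.Subset.antisymm (fun _ hx => hx.1) fun x hx =>
    mem_faceIn_of_forall_le hx fun y hy => (vectorSpan_le_orthogonal_singleton_iff.1 h y hy x hx).le

theorem vectorSpan_faceIn_le (d : E) (A : Set E) : vectorSpan ℝ (faceIn d A) ≤ (ℝ ∙ d)ᗮ :=
  vectorSpan_le_orthogonal_singleton_iff.2 fun _ hx _ hy => hx.2.trans hy.2.symm

theorem faceIn_add_sum_eq {ι κ : Type*} [Fintype ι] [Fintype κ] {P : Set E} {A : ι → Set E}
    {B : κ → Set E} (hP : IsCompact P) (hA : ∀ i, IsCompact (A i)) (hB : ∀ j, IsCompact (B j))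
    (h : P + ∑ i, A i = ∑ j, B j) (d : E) :
    faceIn d P + ∑ i, faceIn d (A i) = ∑ j, faceIn d (B j) := by
  have h' := congrArg (innerSL ℝ d).toExposed h
  rwa [ContinuousLinearMap.toExposed_add, ContinuousLinearMap.toExposed_sum,
    ContinuousLinearMap.toExposed_sum, ← faceIn_eq_toExposed hP,
    Finset.sum_congr rfl fun i _ => (faceIn_eq_toExposed (hA i)).symm,
    Finset.sum_congr rfl fun j _ => (faceIn_eq_toExposed (hB j)).symm] at h'

end Faces

section Polytopes

variable {n : ℕ}

local notation "E" => EuclideanSpace ℝ (Fin n)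

theorem IsPolytope.isCompact {A : Set E} (hA : IsPolytope A) : IsCompact A := by
  obtain ⟨s, -, rfl⟩ := hA
  exact s.finite_toSet.isCompact_convexHull ℝ

theorem IsPolytope.convex {A : Set E} (hA : IsPolytope A) : Convex ℝ A := by
  obtain ⟨s, -, rfl⟩ := hA
  exact convex_convexHull ℝ _

theorem IsPolytope.nonempty {A : Set E} (hA : IsPolytope A) : A.Nonempty := by
  obtain ⟨s, hs, rfl⟩ := hA
  exact convexHull_nonempty_iff.2 (by exact_mod_cast hs)

theorem isPolytope_zero : IsPolytope (0 : Set E) :=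
  ⟨{0}, Finset.singleton_nonempty 0, by
    rw [Finset.coe_singleton, convexHull_singleton, Set.singleton_zero]⟩

theorem IsPolytope.add {A B : Set E} (hA : IsPolytope A) (hB : IsPolytope B) :
    IsPolytope (A + B) := by
  obtain ⟨s, hs, rfl⟩ := hA
  obtain ⟨t, ht, rfl⟩ := hB
  exact ⟨s + t, hs.add ht, by rw [Finset.coe_add, convexHull_add]⟩

theorem IsPolytope.sum {ι : Type*} {s : Finset ι} {A : ι → Set E}
    (hA : ∀ i ∈ s, IsPolytope (A i)) : IsPolytope (∑ i ∈ s, A i) :=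
  Finset.sum_induction A IsPolytope (fun _ _ => IsPolytope.add) isPolytope_zero hA

theorem IsPolytope.add_right_cancel {A B C : Set E} (hA : IsPolytope A) (hB : IsPolytope B)
    (hC : IsPolytope C) (h : A + C = B + C) : A = B :=
  Set.Subset.antisymm
    (hB.convex.subset_of_add_subset_add_right hB.isCompact.isClosed hC.isCompact hC.nonempty h.le)
    (hA.convex.subset_of_add_subset_add_right hA.isCompact.isClosed hC.isCompact hC.nonempty h.ge)

theorem isPolytope_of_finite_extremePoints {A : Set E} (hA : IsCompact A) (hconv : Convex ℝ A)
    (hne : A.Nonempty) (hfin : (A.extremePoints ℝ).Finite) : IsPolytope A := by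
  have hhull : convexHull ℝ (A.extremePoints ℝ) = A := by
    rw [← (hfin.isCompact_convexHull ℝ).isClosed.closure_eq]
    exact closure_convexHull_extremePoints hA hconv
  refine ⟨hfin.toFinset, ?_, by rw [hfin.coe_toFinset, hhull]⟩
  rw [Set.Finite.toFinset_nonempty, ← convexHull_nonempty_iff (𝕜 := ℝ), hhull]
  exact hne

theorem IsPolytope.faceIn {A : Set E} (hA : IsPolytope A) (d : E) : IsPolytope (faceIn d A) := by
  have hexp := ContinuousLinearMap.toExposed.isExposed (A := A) (l := innerSL ℝ d)
  rw [faceIn_eq_toExposed hA.isCompact]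
  refine isPolytope_of_finite_extremePoints (hexp.isCompact hA.isCompact) (hexp.convex hA.convex)
    ((innerSL ℝ d).toExposed_nonempty hA.isCompact hA.nonempty) ?_
  obtain ⟨s, -, rfl⟩ := hA
  exact s.finite_toSet.subset
    (hexp.isExtreme.extremePoints_subset_extremePoints.trans extremePoints_convexHull_subset)

end Polytopes

section ThinParts

variable {n : ℕ}

local notation "E" => EuclideanSpace ℝ (Fin n)

def IsThinPolytope (d : E) (R : Set E) : Prop :=
  IsPolytope R ∧ (∃ v : E, R ⊆ v +ᵥ ((ℝ ∙ d)ᗮ : Set E)) ∧ (affDim R : ℤ) ≤ (n : ℤ) - 2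

theorem IsThinPolytope.of_vectorSpan_le {d : E} {R : Set E} (hR : IsPolytope R)
    (hflat : vectorSpan ℝ R ≤ (ℝ ∙ d)ᗮ) (hdim : Module.finrank ℝ (vectorSpan ℝ R) + 2 ≤ n) :
    IsThinPolytope d R := by
  refine ⟨hR, exists_subset_vadd_of_vectorSpan_le hflat, ?_⟩
  rw [affDim, direction_affineSpan]
  omega

theorem isThinPolytope_neg {d : E} {R : Set E} : IsThinPolytope (-d) R ↔ IsThinPolytope d R := by
  rw [IsThinPolytope, IsThinPolytope, orthogonal_span_singleton_neg]

theorem isThinPolytope_zero (hn : 2 ≤ n) (d : E) : IsThinPolytope d (0 : Set E) :=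
  .of_vectorSpan_le isPolytope_zero (by simp [← Set.singleton_zero])
    (by rwa [← Set.singleton_zero, vectorSpan_singleton, finrank_bot])

theorem finrank_vectorSpan_faceIn_add_two_le {d : E} {A : Set E} (hA : IsZeroVolPolytope A)
    (hnflat : ¬ vectorSpan ℝ A ≤ (ℝ ∙ d)ᗮ) : Module.finrank ℝ (vectorSpan ℝ (faceIn d A)) + 2 ≤ n := by
  have hlt : vectorSpan ℝ (faceIn d A) < vectorSpan ℝ A :=
    lt_of_le_of_ne (vectorSpan_mono ℝ fun _ hx => hx.1)
      fun h => hnflat (h ▸ vectorSpan_faceIn_le d A)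
  have hA_dim := finrank_vectorSpan_lt_of_interior_eq_empty hA.1.convex hA.1.nonempty hA.2
  rw [finrank_euclideanSpace_fin] at hA_dim
  have hF_dim := Submodule.finrank_lt_finrank_of_lt hlt
  omega

open scoped Classical in
noncomputable def thinPart (d : E) (A : Set E) : Set E :=
  if vectorSpan ℝ A ≤ (ℝ ∙ d)ᗮ then 0 else faceIn d A

open scoped Classical in
noncomputable def flatPart (d : E) (A : Set E) : Set E :=
  if vectorSpan ℝ A ≤ (ℝ ∙ d)ᗮ then A else 0

theorem faceIn_eq_thinPart_add_flatPart (d : E) (A : Set E) :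
    faceIn d A = thinPart d A + flatPart d A := by
  by_cases h : vectorSpan ℝ A ≤ (ℝ ∙ d)ᗮ
  · simp [thinPart, flatPart, h, faceIn_of_vectorSpan_le h]
  · simp [thinPart, flatPart, h]

theorem flatPart_neg (d : E) (A : Set E) : flatPart (-d) A = flatPart d A := by
  rw [flatPart, flatPart, orthogonal_span_singleton_neg]

theorem IsPolytope.thinPart {A : Set E} (hA : IsPolytope A) (d : E) :
    IsPolytope (thinPart d A) := by
  unfold _root_.thinPart
  split_ifs
  exacts [isPolytope_zero, hA.faceIn d]

theorem IsPolytope.flatPart {A : Set E} (hA : IsPolytope A) (d : E) :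
    IsPolytope (flatPart d A) := by
  unfold _root_.flatPart
  split_ifs
  exacts [hA, isPolytope_zero]

theorem isThinPolytope_thinPart (hn : 2 ≤ n) (d : E) {A : Set E} (hA : IsZeroVolPolytope A) :
    IsThinPolytope d (thinPart d A) := by
  unfold thinPart
  split_ifs with h
  · exact isThinPolytope_zero hn d
  · exact .of_vectorSpan_le (hA.1.faceIn d) (vectorSpan_faceIn_le d A)
      (finrank_vectorSpan_faceIn_add_two_le hA h)

theorem sum_faceIn_eq {ι : Type*} [Fintype ι] (d : E) (A : ι → Set E) :
    ∑ i, faceIn d (A i) = ∑ i, thinPart d (A i) + ∑ i, flatPart d (A i) := by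
  rw [← Finset.sum_add_distrib]
  exact Finset.sum_congr rfl fun i _ => faceIn_eq_thinPart_add_flatPart d (A i)

end ThinParts

theorem faceIn_add_sum_thinPart_eq {n : ℕ} {ι κ : Type*} [Fintype ι] [Fintype κ]
    {P : Set (EuclideanSpace ℝ (Fin n))} {A : ι → Set (EuclideanSpace ℝ (Fin n))}
    {B : κ → Set (EuclideanSpace ℝ (Fin n))} (hP : IsPolytope P) (hA : ∀ i, IsPolytope (A i))
    (hB : ∀ j, IsPolytope (B j)) (h : P + ∑ i, A i = ∑ j, B j) (d : EuclideanSpace ℝ (Fin n)) :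
    faceIn d P + (∑ i, thinPart d (A i) + ∑ j, thinPart (-d) (B j)) =
      faceIn (-d) P + (∑ j, thinPart d (B j) + ∑ i, thinPart (-d) (A i)) := by
  have hfaces := faceIn_add_sum_eq hP.isCompact (fun i => (hA i).isCompact)
    (fun j => (hB j).isCompact) h
  have h₁ := hfaces d
  have h₂ := hfaces (-d)
  simp only [sum_faceIn_eq, flatPart_neg] at h₁ h₂
  set C := ∑ i, flatPart d (A i)
  set D := ∑ j, flatPart d (B j)
  have hD : IsPolytope D := IsPolytope.sum fun j _ => (hB j).flatPart d
  refine IsPolytope.add_right_cancel ?_ ?_ hD ?_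
  · exact (hP.faceIn d).add ((IsPolytope.sum fun i _ => (hA i).thinPart d).add
      (IsPolytope.sum fun j _ => (hB j).thinPart (-d)))
  · exact (hP.faceIn (-d)).add ((IsPolytope.sum fun j _ => (hB j).thinPart d).add
      (IsPolytope.sum fun i _ => (hA i).thinPart (-d)))
  calc faceIn d P + (∑ i, thinPart d (A i) + ∑ j, thinPart (-d) (B j)) + D
      = faceIn d P + ∑ i, thinPart d (A i) + (∑ j, thinPart (-d) (B j) + D) := by abel
    _ = faceIn d P + ∑ i, thinPart d (A i) +
          (faceIn (-d) P + (∑ i, thinPart (-d) (A i) + C)) := by rw [h₂]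
    _ = faceIn d P + (∑ i, thinPart d (A i) + C) +
          (faceIn (-d) P + ∑ i, thinPart (-d) (A i)) := by abel
    _ = faceIn (-d) P + (∑ j, thinPart d (B j) + ∑ i, thinPart (-d) (A i)) + D := by
        rw [h₁]; abel

theorem stmt9_general (n : ℕ) (P : Set (EuclideanSpace ℝ (Fin n)))
    (hP : IsPolytope P) (hzs : IsZeroSummand P)
    (d : EuclideanSpace ℝ (Fin n))
    (hface : (affDim (faceIn (-d) P) : ℤ) ≤ (n : ℤ) - 2) :
    ∃ (r s : ℕ) (Rs : Fin r → Set (EuclideanSpace ℝ (Fin n)))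
      (Ts : Fin s → Set (EuclideanSpace ℝ (Fin n))),
      (∀ i, IsPolytope (Rs i) ∧
        (∃ v : EuclideanSpace ℝ (Fin n),
          Rs i ⊆ v +ᵥ ((ℝ ∙ d)ᗮ : Set (EuclideanSpace ℝ (Fin n)))) ∧
        (affDim (Rs i) : ℤ) ≤ (n : ℤ) - 2) ∧
      (∀ j, IsPolytope (Ts j) ∧
        (∃ v : EuclideanSpace ℝ (Fin n),
          Ts j ⊆ v +ᵥ ((ℝ ∙ d)ᗮ : Set (EuclideanSpace ℝ (Fin n)))) ∧
        (affDim (Ts j) : ℤ) ≤ (n : ℤ) - 2) ∧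
      faceIn d P + ∑ i, Rs i = ∑ j, Ts j := by
  obtain ⟨r, s, A, B, hA, hB, h⟩ := hzs
  have hn : 2 ≤ n := by omega
  have hG : IsThinPolytope d (faceIn (-d) P) := isThinPolytope_neg.1
    ⟨hP.faceIn (-d), exists_subset_vadd_of_vectorSpan_le (vectorSpan_faceIn_le (-d) P), hface⟩
  refine ⟨r + s, s + r + 1,
    Fin.append (fun i => thinPart d (A i)) (fun j => thinPart (-d) (B j)),
    Fin.cons (faceIn (-d) P)
      (Fin.append (fun j => thinPart d (B j)) (fun i => thinPart (-d) (A i))),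
    ?_, ?_, ?_⟩
  · simp only [Fin.forall_fin_add, Fin.append_left, Fin.append_right]
    exact ⟨fun i => isThinPolytope_thinPart hn d (hA i),
      fun j => isThinPolytope_neg.1 (isThinPolytope_thinPart hn (-d) (hB j))⟩
  · simp only [Fin.forall_fin_succ, Fin.cons_zero, Fin.cons_succ, Fin.forall_fin_add,
      Fin.append_left, Fin.append_right]
    exact ⟨hG, fun j => isThinPolytope_thinPart hn d (hB j),
      fun i => isThinPolytope_neg.1 (isThinPolytope_thinPart hn (-d) (hA i))⟩
  · simp only [Fin.sum_cons, Fin.sum_univ_add, Fin.append_left, Fin.append_right]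
    exact faceIn_add_sum_thinPart_eq hP (fun i => (hA i).1) (fun j => (hB j).1) h d

theorem stmt9 (n : ℕ) (P : Set (EuclideanSpace ℝ (Fin n)))
    (hP : IsPolytope P) (hzs : IsZeroSummand P)
    (d : EuclideanSpace ℝ (Fin n)) (hd : d ≠ 0)
    (hface : (affDim (faceIn (-d) P) : ℤ) ≤ (n : ℤ) - 2) :
    ∃ (r s : ℕ) (Rs : Fin r → Set (EuclideanSpace ℝ (Fin n)))
      (Ts : Fin s → Set (EuclideanSpace ℝ (Fin n))),
      (∀ i, IsPolytope (Rs i) ∧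
        (∃ v : EuclideanSpace ℝ (Fin n),
          Rs i ⊆ v +ᵥ ((ℝ ∙ d)ᗮ : Set (EuclideanSpace ℝ (Fin n)))) ∧
        (affDim (Rs i) : ℤ) ≤ (n : ℤ) - 2) ∧
      (∀ j, IsPolytope (Ts j) ∧
        (∃ v : EuclideanSpace ℝ (Fin n),
          Ts j ⊆ v +ᵥ ((ℝ ∙ d)ᗮ : Set (EuclideanSpace ℝ (Fin n)))) ∧
        (affDim (Ts j) : ℤ) ≤ (n : ℤ) - 2) ∧
      faceIn d P + ∑ i, Rs i = ∑ j, Ts j :=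
  stmt9_general n P hP hzs d hface
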